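/- arXiv:1504.02530 — 3 statements merged into one kernel-verified Lean document; each statement's English description precedes it below -/
import Mathlib

section
/- Let T = (V,E) be a finite tree, let σ_vv ≠ 0 be a given real number for each vertex v ∈ V, and let σ_uv = σ_vu be a given real number for each edge {u,v} ∈ E. Define the symmetric matrix Σ indexed by V by Σ_vv = σ_vv, and for u ≠ v with unique path u = w_0, w_1, …, w_k = v in T, Σ_uv = (∏_{i=0}^{k−1} σ_{w_i w_{i+1}}) / (∏_{i=1}^{k−1} σ_{w_i w_i}). Then det Σ = (∏_{{u,v}∈E} (σ_uu·σ_vv − σ_uv²)) / (∏_{v∈V} σ_vv^{d_v − 1}), where d_v is the degree of v in T. -/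
/-!
Let `ℓ` be a leaf of the tree with neighbour `u`. Every path from `ℓ` passes through `u`,
so `Σ ℓ v = (σ_ℓu / σ_u) Σ u v` for `v ≠ ℓ`, and subtracting `σ_ℓu / σ_u` times row `u` from
row `ℓ` leaves the single entry `σ_ℓ - σ_ℓu² / σ_u` in row `ℓ`. The complementary minor is the
matrix of the tree `T - ℓ`, so by induction `det Σ = ∏_v σ_v · ∏_{uv ∈ E} (1 - σ_uv² / (σ_u σ_v))`.
This is the stated formula because `∏_v σ_v ^ d_v = ∏_{uv ∈ E} σ_u σ_v`, each edge being counted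
by its two darts.
-/

open SimpleGraph Finset

theorem Matrix.det_eq_mul_det_submatrix_compl_singleton {n R : Type*} [Fintype n] [DecidableEq n]
    [CommRing R] (M : Matrix n n R) (i : n) (h : ∀ j, j ≠ i → M i j = 0) :
    M.det = M i i * (M.submatrix ((↑) : ({i}ᶜ : Set n) → n) (↑)).det := by
  rw [M.twoBlockTriangular_det (· ∈ ({i}ᶜ : Set n)) (by simpa using h), mul_comm,
    M.equiv_block_det (q := fun j => id j = i) (by simp)]
  exact congrArg (· * _) (M.det_toSquareBlock_id i)

namespace Sym2

def endpointProd {V M : Type*} [CommMonoid M] (f : V → M) : Sym2 V → M :=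
  Sym2.lift ⟨fun a b => f a * f b, fun _ _ => mul_comm _ _⟩

@[simp] theorem endpointProd_mk {V M : Type*} [CommMonoid M] (f : V → M) (a b : V) :
    endpointProd f s(a, b) = f a * f b := rfl

@[simp] theorem endpointProd_map {V W M : Type*} [CommMonoid M] (f : W → M) (g : V → W)
    (e : Sym2 V) : endpointProd f (e.map g) = endpointProd (f ∘ g) e := by
  induction e with | _ a b => rfl

end Sym2

namespace SimpleGraph

theorem prod_pow_degree_eq_prod_edgeFinset {V M : Type*} [Fintype V] [DecidableEq V]
    [CommMonoid M] (G : SimpleGraph V) [DecidableRel G.Adj] (f : V → M) :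
    ∏ v, f v ^ G.degree v = ∏ e ∈ G.edgeFinset, Sym2.endpointProd f e := by
  calc ∏ v, f v ^ G.degree v = ∏ v, ∏ d ∈ {d : G.Dart | d.fst = v}, f d.fst := by
        refine prod_congr rfl fun v _ => ?_
        rw [prod_congr rfl fun d hd => congrArg f (mem_filter.mp hd).2, prod_const,
          dart_fst_fiber_card_eq_degree]
    _ = ∏ d : G.Dart, f d.fst := prod_fiberwise _ _ _
    _ = ∏ e ∈ G.edgeFinset, ∏ d ∈ {d : G.Dart | d.edge = e}, f d.fst :=
        (prod_fiberwise_of_maps_to (fun d _ => by simp) _).symm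
    _ = ∏ e ∈ G.edgeFinset, Sym2.endpointProd f e := by
        refine prod_congr rfl fun e he => ?_
        induction e with | _ a b => ?_
        let d : G.Dart := ⟨(a, b), mem_edgeFinset.mp he⟩
        rw [show s(a, b) = d.edge from rfl, Dart.edge_fiber, prod_pair d.symm_ne.symm]
        rfl

theorem prod_zpow_degree_sub_one {V K : Type*} [Fintype V] [DecidableEq V] [Field K]
    (G : SimpleGraph V) [DecidableRel G.Adj] {d : V → K} (hd : ∀ v, d v ≠ 0) :
    ∏ v, d v ^ ((G.degree v : ℤ) - 1) =
      (∏ e ∈ G.edgeFinset, Sym2.endpointProd d e) / ∏ v, d v := by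
  simp only [zpow_sub₀ (hd _), zpow_natCast, zpow_one]
  rw [prod_div_distrib, prod_pow_degree_eq_prod_edgeFinset]

theorem prod_edgeFinset_eq_mul_prod_induce_compl_singleton {V M : Type*} [CommMonoid M]
    [Fintype V] [DecidableEq V] {G : SimpleGraph V} [DecidableRel G.Adj] (F : Sym2 V → M)
    {ℓ u : V} (h : G.Adj ℓ u) (hℓ : G.degree ℓ = 1) :
    ∏ e ∈ G.edgeFinset, F e =
      F s(ℓ, u) * ∏ e ∈ (G.induce {ℓ}ᶜ).edgeFinset, F (Sym2.map (↑) e) := by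
  have hinc : {s(ℓ, u)} = G.incidenceFinset ℓ :=
    eq_of_subset_of_card_le (by simpa [mem_incidenceFinset] using h)
      (by simp [card_incidenceFinset_eq_degree, hℓ])
  rw [← prod_filter_mul_prod_filter_not G.edgeFinset (ℓ ∈ ·), ← incidenceFinset_eq_filter,
    ← hinc, prod_singleton]
  congr 1
  have hcompl : {e ∈ G.edgeFinset | ℓ ∉ e} =
      (G.induce {ℓ}ᶜ).edgeFinset.map
        (Function.Embedding.subtype (· ∈ ({ℓ}ᶜ : Set V))).sym2Map := by
    rw [map_edgeFinset_induce]
    ext e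
    induction e with | _ a b => simp [and_comm, or_imp, forall_and, eq_comm]
  rw [hcompl, prod_map]
  rfl

variable {V K : Type*} [Field K] {G : SimpleGraph V}

structure IsPathProductMatrix (G : SimpleGraph V) (d : V → K) (w : Sym2 V → K)
    (Sig : Matrix V V K) : Prop where
  diag : ∀ v, Sig v v = d v
  offDiag : ∀ u v, u ≠ v → ∀ p : G.Walk u v, p.IsPath →
    Sig u v = (p.edges.map w).prod / (p.support.tail.dropLast.map d).prod

namespace IsPathProductMatrix

variable {d : V → K} {w : Sym2 V → K} {Sig : Matrix V V K}

theorem induce (hS : G.IsPathProductMatrix d w Sig) (s : Set V) :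
    (G.induce s).IsPathProductMatrix (d ∘ (↑)) (w ∘ Sym2.map (↑))
      (Sig.submatrix (↑) (↑)) where
  diag v := hS.diag v
  offDiag u v huv p hp := by
    let f : G.induce s →g G := (Embedding.induce s).toHom
    have := hS.offDiag (f u) (f v) (Subtype.coe_ne_coe.mpr huv) (p.map f)
      (hp.map Subtype.val_injective)
    simp only [Walk.edges_map, Walk.support_map, ← List.map_tail, ← List.map_dropLast,
      List.map_map] at this
    exact this

theorem apply_adj (hS : G.IsPathProductMatrix d w Sig) {u v : V} (h : G.Adj u v) :
    Sig u v = w s(u, v) := by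
  simpa using hS.offDiag u v h.ne (Walk.cons h .nil) (by simp [h.ne])

theorem apply_eq_div_mul_of_cons (hS : G.IsPathProductMatrix d w Sig) {ℓ u v : V}
    (h : G.Adj ℓ u) (p : G.Walk u v) (hp : (p.cons h).IsPath) (huv : u ≠ v) :
    Sig ℓ v = w s(ℓ, u) / d u * Sig u v := by
  obtain ⟨hp', hℓp⟩ := (Walk.cons_isPath_iff h p).mp hp
  have hℓv : ℓ ≠ v := fun hℓv => hℓp (hℓv ▸ p.end_mem_support)
  rw [hS.offDiag ℓ v hℓv _ hp, hS.offDiag u v huv p hp']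
  cases p with
  | nil => exact absurd rfl huv
  | cons h' q =>
    simp only [Walk.edges_cons, Walk.support_cons, List.tail_cons,
      List.dropLast_cons_of_ne_nil q.support_ne_nil, List.map_cons, List.prod_cons]
    exact mul_div_mul_comm _ _ _ _

theorem apply_leaf (hS : G.IsPathProductMatrix d w Sig) (hG : G.Preconnected) {ℓ u : V}
    (h : G.Adj ℓ u) (hℓ : (G.neighborSet ℓ).Subsingleton) (hu : d u ≠ 0) {v : V}
    (hv : v ≠ ℓ) :
    Sig ℓ v = w s(ℓ, u) / d u * Sig u v := by
  obtain rfl | huv := eq_or_ne u v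
  · rw [hS.apply_adj h, hS.diag, div_mul_cancel₀ _ hu]
  obtain ⟨p, hp⟩ := hG.exists_isPath u v
  have hℓp : ℓ ∉ p.support :=
    hp.isTrail.not_mem_support_of_subsingleton_neighborSet h.ne hv.symm hℓ
  exact hS.apply_eq_div_mul_of_cons h p (hp.cons hℓp) huv

variable [Fintype V] [DecidableEq V]

theorem det_eq_mul_det_compl_leaf (hS : G.IsPathProductMatrix d w Sig) (hG : G.Preconnected)
    {ℓ u : V} (h : G.Adj ℓ u) (hℓ : (G.neighborSet ℓ).Subsingleton) (hu : d u ≠ 0) :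
    Sig.det = (d ℓ - w s(ℓ, u) ^ 2 / d u) *
      (Sig.submatrix ((↑) : ({ℓ}ᶜ : Set V) → V) (↑)).det := by
  rw [← Sig.det_updateRow_add_smul_self h.ne (-(w s(ℓ, u) / d u)),
    Matrix.det_eq_mul_det_submatrix_compl_singleton _ ℓ]
  · congr 1
    · simp only [Matrix.updateRow_self, Pi.add_apply, Pi.smul_apply, smul_eq_mul, hS.diag,
        hS.apply_adj h.symm, Sym2.eq_swap]
      ring
    · congr 1
      ext i j
      simp [Matrix.updateRow_ne (Set.mem_compl_singleton_iff.mp i.2)]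
  · intro j hj
    simp only [Matrix.updateRow_self, Pi.add_apply, Pi.smul_apply, smul_eq_mul,
      hS.apply_leaf hG h hℓ hu hj]
    ring

variable [DecidableRel G.Adj]

theorem det_eq_prod_mul_prod_one_sub (hT : G.IsTree) (hd : ∀ v, d v ≠ 0)
    (hS : G.IsPathProductMatrix d w Sig) :
    Sig.det = (∏ v, d v) * ∏ e ∈ G.edgeFinset, (1 - w e ^ 2 / Sym2.endpointProd d e) := by
  induction hn : Fintype.card V using Nat.strong_induction_on generalizing V with
  | _ n ih =>
  rcases subsingleton_or_nontrivial V with hV | hV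
  · obtain ⟨v⟩ := hT.connected.nonempty
    have : Unique V := _root_.uniqueOfSubsingleton v
    have hE : ∏ e ∈ G.edgeFinset, (1 - w e ^ 2 / Sym2.endpointProd d e) = 1 :=
      prod_eq_one fun e he => by
        induction e with
        | _ a b => exact absurd (Subsingleton.elim a b) (G.ne_of_adj (mem_edgeFinset.mp he))
    rw [hE, Matrix.det_unique, Fintype.prod_unique, hS.diag, mul_one]
  · obtain ⟨ℓ, hℓ⟩ := hT.exists_vert_degree_one_of_nontrivial
    obtain ⟨u, h, hu⟩ := degree_eq_one_iff_existsUnique_adj.mp hℓ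
    have hsub : (G.neighborSet ℓ).Subsingleton := fun x hx y hy => (hu x hx).trans (hu y hy).symm
    have hT' : (G.induce {ℓ}ᶜ).IsTree :=
      ⟨hT.connected.induce_compl_singleton_of_degree_eq_one hℓ, hT.isAcyclic.induce _⟩
    rw [hS.det_eq_mul_det_compl_leaf hT.connected.preconnected h hsub (hd u),
      ih _ (hn ▸ Fintype.card_subtype_lt (x := ℓ) (by simp)) hT' (fun v => hd v)
        (hS.induce _) rfl,
      prod_edgeFinset_eq_mul_prod_induce_compl_singleton _ h hℓ,
      Fintype.prod_eq_mul_prod_subtype_ne _ ℓ]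
    have hA : ∏ v : ({ℓ}ᶜ : Set V), d v = ∏ v : {v // v ≠ ℓ}, d v := rfl
    simp only [Sym2.endpointProd_map, Sym2.endpointProd_mk, Function.comp_def, hA]
    have hdℓ := hd ℓ
    have hdu := hd u
    field_simp

end IsPathProductMatrix

end SimpleGraph

/-- Let `T = (V,E)` be a finite tree, `σD v ≠ 0` for each vertex,
and `w e` a weight for each edge. Let `Σ` be the matrix with `Σ v v = σD v` and, for
`u ≠ v` with unique path `u = w₀, …, w_k = v`,
`Σ u v = (∏ edge covariances along the path) / (∏ diagonal entries at interior vertices)`.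
Then `det Σ = (∏_{{u,v}∈E} (σ_uu·σ_vv − σ_uv²)) / (∏_{v∈V} σ_vv^{d_v − 1})`. -/
theorem stmt_3 {V : Type*} [Fintype V] [DecidableEq V] (G : SimpleGraph V)
    [DecidableRel G.Adj] (hT : G.IsTree)
    (σD : V → ℝ) (hσD : ∀ v, σD v ≠ 0) (w : Sym2 V → ℝ)
    (Sig : Matrix V V ℝ)
    (hdiag : ∀ v, Sig v v = σD v)
    (hoff : ∀ u v : V, u ≠ v → ∀ p : G.Walk u v, p.IsPath →
      Sig u v = (p.edges.map w).prod / ((p.support.tail.dropLast).map σD).prod) :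
    Sig.det =
      (∏ e ∈ G.edgeFinset,
          (Sym2.lift ⟨fun a b => σD a * σD b, fun a b => mul_comm _ _⟩ e - (w e) ^ 2)) /
        ∏ v : V, σD v ^ ((G.degree v : ℤ) - 1) := by
  have hP (e : Sym2 V) : Sym2.endpointProd σD e ≠ 0 := by
    induction e with | _ a b => exact mul_ne_zero (hσD a) (hσD b)
  rw [(IsPathProductMatrix.mk hdiag hoff).det_eq_prod_mul_prod_one_sub hT hσD,
    G.prod_zpow_degree_sub_one hσD]
  change _ = (∏ e ∈ G.edgeFinset, (Sym2.endpointProd σD e - w e ^ 2)) / _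
  rw [prod_congr rfl fun e _ => one_sub_div (hP e), prod_div_distrib]
  have hE := prod_ne_zero_iff.mpr fun e (_ : e ∈ G.edgeFinset) => hP e
  have hV := prod_ne_zero_iff.mpr fun v (_ : v ∈ univ) => hσD v
  field_simp
end

section
/- Let T1 = (V,E,W) be a weighted tree with |V| ≥ 3 having a leaf vertex n2 whose unique neighbor n1 has degree 2, and let v be the other neighbor of n1. Let T2 = (V,E',W') be the weighted tree obtained from T1 by the grafting operation (deleting edge {n1,n2} and adding edge {v,n2} with the same weight, all other weights unchanged). Then S(T1,W) ≥ S(T2,W'): grafting never increases the maximin value. -/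
/-!
In a tree the paths between `a`, `b`, `z` meet at a median `m`, and `ρ²_{ab|z}` is a function of
`A = σ_am`, `B = σ_mb`, `t = σ_mz²` that decreases in `t` and, for a fixed product `AB`, is
largest at `A = 1`. Grafting changes only covariances involving `n2`. For a pair `{a, b} ∌ n2`
it can only lower `ρ²_{ab|n2}`: either `t` grows from `(σ_mv w_{n1v} w_{n1n2})²` to
`(σ_mv w_{n1n2})²`, or (when `a = n1`) the median moves from `n1` to `v`. Once grafted, `n2` is
separated from any `a ≠ v` by `v`, so `ρ²_{a n2|v} = 0`; and `ρ²_{v n2|n1}` after grafting is at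
most `ρ²_{n1 n2|z}` before, for every `z`.
-/

open SimpleGraph

/-- The squared partial correlation coefficient
`ρ²_{ab|z} = (σ_ab − σ_az·σ_bz)² / ((1 − σ_az²)·(1 − σ_bz²))`
for a covariance function `σ` with unit diagonal. -/
noncomputable def rho2 {V : Type*} (σ : V → V → ℝ) (a b z : V) : ℝ :=
  (σ a b - σ a z * σ b z) ^ 2 / ((1 - (σ a z) ^ 2) * (1 - (σ b z) ^ 2))

/-- The maximin value `S(T,W) = max_{{a,b}} min_{z∉{a,b}} ρ²_{ab|z}`, expressed with
suprema/infima of the (finite, nonempty) sets of attained values. -/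
noncomputable def maximin {V : Type*} (σ : V → V → ℝ) : ℝ :=
  sSup {x : ℝ | ∃ a b : V, a ≠ b ∧
    x = sInf {y : ℝ | ∃ z : V, z ≠ a ∧ z ≠ b ∧ y = rho2 σ a b z}}

/-! ### Squared partial correlations through a median -/

/-- `ρ²_{ab|z}` through the median `m` of `a`, `b`, `z`, with `A = σ_am`, `B = σ_mb`,
`t = σ_mz²`. -/
noncomputable def medianRho2 (A B t : ℝ) : ℝ :=
  (A * B) ^ 2 * (1 - t) ^ 2 / ((1 - A ^ 2 * t) * (1 - B ^ 2 * t))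

lemma rho2_eq_medianRho2 {V : Type*} {σ : V → V → ℝ} {a b z : V} {A B s : ℝ}
    (hab : σ a b = A * B) (haz : σ a z = A * s) (hbz : σ b z = B * s) :
    rho2 σ a b z = medianRho2 A B (s ^ 2) := by
  unfold rho2 medianRho2
  rw [hab, haz, hbz]
  ring

lemma antitoneOn_one_sub_div_one_sub_mul {c : ℝ} (hc : c ≤ 1) :
    AntitoneOn (fun t : ℝ => (1 - t) / (1 - c * t)) (Set.Ico 0 1) := by
  rintro s ⟨hs0, hs1⟩ t ⟨ht0, ht1⟩ hst
  have hcs : 0 < 1 - c * s := by nlinarith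
  have hct : 0 < 1 - c * t := by nlinarith
  rw [div_le_div_iff₀ hct hcs]
  nlinarith [mul_nonneg (sub_nonneg.2 hc) (sub_nonneg.2 hst)]

lemma medianRho2_antitoneOn {A B : ℝ} (hA : A ^ 2 ≤ 1) (hB : B ^ 2 ≤ 1) :
    AntitoneOn (medianRho2 A B) (Set.Ico 0 1) := by
  have hfac : ∀ t, medianRho2 A B t =
      (A * B) ^ 2 * ((1 - t) / (1 - A ^ 2 * t) * ((1 - t) / (1 - B ^ 2 * t))) := fun t => by
    rw [medianRho2, div_mul_div_comm, ← sq, mul_div_assoc]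
  have hnonneg : ∀ c, c ≤ 1 → ∀ t ∈ Set.Ico (0 : ℝ) 1, 0 ≤ (1 - t) / (1 - c * t) := by
    rintro c hc t ⟨ht0, ht1⟩
    exact div_nonneg (by linarith) (by nlinarith)
  intro s hs t ht hst
  rw [hfac s, hfac t]
  gcongr ?_ * ?_
  exact mul_le_mul (antitoneOn_one_sub_div_one_sub_mul hA hs ht hst)
    (antitoneOn_one_sub_div_one_sub_mul hB hs ht hst) (hnonneg _ hB t ht) (hnonneg _ hA s hs)

lemma medianRho2_le_medianRho2_one_mul {A B t : ℝ} (hA : A ^ 2 ≤ 1) (hB : B ^ 2 ≤ 1)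
    (ht0 : 0 ≤ t) (ht1 : t < 1) : medianRho2 A B t ≤ medianRho2 1 (A * B) t := by
  unfold medianRho2
  rw [one_pow, one_mul, one_mul, mul_pow]
  have hAB : A ^ 2 * B ^ 2 ≤ 1 := mul_le_one₀ hA (sq_nonneg B) hB
  apply div_le_div_of_nonneg_left (by positivity) (mul_pos (by linarith) (by nlinarith))
  nlinarith [mul_nonneg ht0 (mul_nonneg (sub_nonneg.2 hA) (sub_nonneg.2 hB))]

lemma rho2_nonneg {V : Type*} {σ : V → V → ℝ} {a b z : V} (ha : σ a z ^ 2 ≤ 1)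
    (hb : σ b z ^ 2 ≤ 1) : 0 ≤ rho2 σ a b z :=
  div_nonneg (sq_nonneg _) (mul_nonneg (sub_nonneg.2 ha) (sub_nonneg.2 hb))

lemma rho2_eq_zero_of_eq_mul {V : Type*} {σ : V → V → ℝ} {a b z : V}
    (h : σ a b = σ a z * σ b z) : rho2 σ a b z = 0 := by
  rw [rho2, h, sub_self, zero_pow two_ne_zero, zero_div]

lemma rho2_comm {V : Type*} {σ : V → V → ℝ} (hσ : ∀ x y, σ x y = σ y x) (a b z : V) :
    rho2 σ a b z = rho2 σ b a z := by
  rw [rho2, rho2, hσ a b, mul_comm (σ b z), mul_comm (1 - σ b z ^ 2)]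

/-! ### The maximin value -/

section Maximin

variable {V : Type*} {σ : V → V → ℝ} {a b : V}

noncomputable def minRho2 (σ : V → V → ℝ) (a b : V) : ℝ :=
  sInf {y : ℝ | ∃ z : V, z ≠ a ∧ z ≠ b ∧ y = rho2 σ a b z}

lemma minRho2_le [Finite V] {z : V} (hza : z ≠ a) (hzb : z ≠ b) :
    minRho2 σ a b ≤ rho2 σ a b z := by
  refine csInf_le ((Set.finite_range (rho2 σ a b)).subset ?_).bddBelow ⟨z, hza, hzb, rfl⟩
  rintro _ ⟨z, -, -, rfl⟩
  exact ⟨z, rfl⟩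

lemma le_minRho2 {c : ℝ} (hne : ∃ z, z ≠ a ∧ z ≠ b)
    (h : ∀ z, z ≠ a → z ≠ b → c ≤ rho2 σ a b z) : c ≤ minRho2 σ a b := by
  obtain ⟨z, hza, hzb⟩ := hne
  refine le_csInf ⟨_, z, hza, hzb, rfl⟩ ?_
  rintro _ ⟨z, hza, hzb, rfl⟩
  exact h z hza hzb

lemma minRho2_comm (hσ : ∀ x y, σ x y = σ y x) (a b : V) : minRho2 σ a b = minRho2 σ b a := by
  simp only [minRho2, rho2_comm hσ a b, and_left_comm]

lemma minRho2_le_maximin [Finite V] (hab : a ≠ b) : minRho2 σ a b ≤ maximin σ := by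
  refine le_csSup ((Set.finite_range fun p : V × V => minRho2 σ p.1 p.2).subset ?_).bddAbove
    ⟨a, b, hab, rfl⟩
  rintro _ ⟨a, b, -, rfl⟩
  exact ⟨(a, b), rfl⟩

lemma maximin_le_of_forall_minRho2_le {c : ℝ} (hc : 0 ≤ c)
    (h : ∀ a b, a ≠ b → minRho2 σ a b ≤ c) : maximin σ ≤ c :=
  Real.sSup_le (by rintro _ ⟨a, b, hab, rfl⟩; exact h a b hab) hc

lemma maximin_nonneg (hσ : ∀ x y, σ x y ^ 2 ≤ 1) : 0 ≤ maximin σ :=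
  Real.sSup_nonneg <| by
    rintro _ ⟨a, b, -, rfl⟩
    exact Real.sInf_nonneg <| by
      rintro _ ⟨z, -, -, rfl⟩
      exact rho2_nonneg (hσ a z) (hσ b z)

end Maximin

/-! ### Covariances of weighted trees -/

lemma List.abs_prod_le_one {l : List ℝ} (h : ∀ x ∈ l, |x| ≤ 1) : |l.prod| ≤ 1 := by
  induction l with
  | nil => simp
  | cons x l ih =>
    rw [List.forall_mem_cons] at h
    rw [List.prod_cons, abs_mul]
    exact mul_le_one₀ h.1 (abs_nonneg _) (ih h.2)

namespace SimpleGraph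

variable {V : Type*} {G : SimpleGraph V} {w : Sym2 V → ℝ} {σ : V → V → ℝ}

def IsPathCov (G : SimpleGraph V) (w : Sym2 V → ℝ) (σ : V → V → ℝ) : Prop :=
  ∀ u u' : V, ∀ p : G.Walk u u', p.IsPath → σ u u' = (p.edges.map w).prod

def graft (G : SimpleGraph V) (u l v : V) : SimpleGraph V :=
  G.deleteEdges {s(u, l)} ⊔ fromEdgeSet {s(v, l)}

lemma Walk.IsPath.append {a b c : V} {p : G.Walk a b} {q : G.Walk b c} (hp : p.IsPath)
    (hq : q.IsPath) (h : ∀ x ∈ p.support, x ∈ q.support → x = b) : (p.append q).IsPath := by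
  have hq' := hq.support_nodup
  rw [← q.cons_tail_support, List.nodup_cons] at hq'
  rw [Walk.isPath_def, Walk.support_append]
  refine hp.support_nodup.append hq'.2 fun x hxp hxq => ?_
  obtain rfl := h x hxp (q.mem_support_iff.2 (Or.inr hxq))
  exact hq'.1 hxq

namespace IsPathCov

lemma apply_self (hσ : G.IsPathCov w σ) (u : V) : σ u u = 1 := by
  simpa using hσ u u .nil .nil

lemma apply_of_adj (hσ : G.IsPathCov w σ) {x y : V} (h : G.Adj x y) : σ x y = w s(x, y) := by
  simpa using hσ x y (.cons h .nil) (Walk.IsPath.nil.cons (by simpa using h.ne))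

lemma symm (hσ : G.IsPathCov w σ) (hc : G.Connected) (a b : V) : σ a b = σ b a := by
  obtain ⟨p, hp⟩ := hc.preconnected.exists_isPath a b
  rw [hσ a b p hp, hσ b a p.reverse hp.reverse, Walk.edges_reverse, List.map_reverse,
    List.prod_reverse]

lemma abs_le_one (hσ : G.IsPathCov w σ) (hc : G.Connected) (hw : ∀ e ∈ G.edgeSet, |w e| ≤ 1)
    (a b : V) : |σ a b| ≤ 1 := by
  obtain ⟨p, hp⟩ := hc.preconnected.exists_isPath a b
  rw [hσ a b p hp]
  refine List.abs_prod_le_one fun x hx => ?_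
  obtain ⟨e, he, rfl⟩ := List.mem_map.1 hx
  exact hw e (p.edges_subset_edgeSet he)

lemma mul_of_mem_support (hσ : G.IsPathCov w σ) {a b m : V} (p : G.Walk a b) (hp : p.IsPath)
    (hm : m ∈ p.support) : σ a b = σ a m * σ m b := by
  classical
  rw [hσ a m _ (hp.takeUntil hm), hσ m b _ (hp.dropUntil hm), ← List.prod_append,
    ← List.map_append, ← Walk.edges_append, Walk.take_spec, hσ a b p hp]

lemma mul_penultimate (hσ : G.IsPathCov w σ) {x y : V} (p : G.Walk x y) (hp : p.IsPath)
    (hne : ¬p.Nil) : σ x y = σ x p.penultimate * w s(p.penultimate, y) := by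
  rw [hσ.mul_of_mem_support p hp (p.getVert_mem_support _),
    hσ.apply_of_adj (p.adj_penultimate hne)]

/-- In a tree the three paths between `a`, `b`, `c` share a vertex `m`. -/
lemma exists_median (hσ : G.IsPathCov w σ) (hc : G.Connected) (a b c : V) :
    ∃ m, σ a b = σ a m * σ m b ∧ σ a c = σ a m * σ m c ∧ σ b c = σ b m * σ m c := by
  classical
  obtain ⟨p, hp⟩ := hc.preconnected.exists_isPath a b
  obtain ⟨r, hr⟩ := hc.preconnected.exists_isPath c a
  obtain ⟨m, hmp, hmr, hfirst⟩ := r.exists_mem_support_forall_mem_support_imp_eq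
    p.support.toFinset ⟨a, by simp [p.start_mem_support, r.end_mem_support]⟩
  rw [List.mem_toFinset] at hmp
  set p₂ := (p.dropUntil m hmp).reverse
  set r₁ := (r.takeUntil m hmr).reverse
  have hq : (p₂.append r₁).IsPath := by
    refine (hp.dropUntil hmp).reverse.append (hr.takeUntil hmr).reverse fun x hx hx' => ?_
    rw [Walk.support_reverse, List.mem_reverse] at hx hx'
    exact hfirst x (List.mem_toFinset.2 (p.support_dropUntil_subset_support hmp hx)) hx'
  have hmq : m ∈ (p₂.append r₁).support :=
    (Walk.mem_support_append_iff _ _).2 (Or.inr r₁.start_mem_support)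
  refine ⟨m, hσ.mul_of_mem_support p hp hmp, ?_, hσ.mul_of_mem_support _ hq hmq⟩
  rw [hσ.symm hc a c, hσ.mul_of_mem_support r hr hmr, hσ.symm hc c m, hσ.symm hc m a, mul_comm]

lemma eq_mul_of_neighborSet_eq_singleton (hσ : G.IsPathCov w σ) (hc : G.Connected)
    {x l u : V} (hN : G.neighborSet l = {u}) (hx : x ≠ l) : σ x l = σ x u * w s(u, l) := by
  obtain ⟨p, hp⟩ := hc.preconnected.exists_isPath x l
  have hne : ¬p.Nil := Walk.not_nil_of_ne hx
  have hu : p.penultimate ∈ G.neighborSet l := (p.adj_penultimate hne).symm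
  rw [hN, Set.mem_singleton_iff] at hu
  rw [hσ.mul_penultimate p hp hne, hu]

lemma eq_mul_of_neighborSet_eq_pair (hσ : G.IsPathCov w σ) (hc : G.Connected)
    {x y u l : V} (hN : G.neighborSet y = {u, l}) (hl : (G.neighborSet l).Subsingleton)
    (hxy : x ≠ y) (hxl : x ≠ l) : σ x y = σ x u * w s(u, y) := by
  obtain ⟨p, hp⟩ := hc.preconnected.exists_isPath x y
  have hne : ¬p.Nil := Walk.not_nil_of_ne hxy
  have hly : l ≠ y := G.ne_of_adj (show l ∈ G.neighborSet y by simp [hN]).symm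
  have hl' : l ∉ p.support :=
    hp.isTrail.not_mem_support_of_subsingleton_neighborSet hxl.symm hly hl
  have hu : p.penultimate = u := by
    have hmem : p.penultimate ∈ G.neighborSet y := (p.adj_penultimate hne).symm
    rw [hN] at hmem
    rcases hmem with h | h
    · exact h
    · exact absurd (h ▸ p.getVert_mem_support _) hl'
  rw [hσ.mul_penultimate p hp hne, hu]

lemma eq_of_isPath {G' : SimpleGraph V} {w' : Sym2 V → ℝ} {σ' : V → V → ℝ}
    (hσ : G.IsPathCov w σ) (hσ' : G'.IsPathCov w' σ') {a b : V} (p : G.Walk a b) (hp : p.IsPath)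
    (h : ∀ e ∈ p.edges, e ∈ G'.edgeSet ∧ w' e = w e) : σ' a b = σ a b := by
  rw [hσ' a b _ (hp.transfer fun e he => (h e he).1), Walk.edges_transfer, hσ a b p hp]
  exact congrArg List.prod (List.map_congr_left fun e he => (h e he).2)

end IsPathCov

lemma adj_graft_iff {u l v x : V} (hN : G.neighborSet l = {u}) (hvl : v ≠ l) :
    (G.graft u l v).Adj x l ↔ x = v := by
  have hxl : G.Adj x l ↔ x = u := by rw [adj_comm, ← mem_neighborSet, hN, Set.mem_singleton_iff]
  simp only [graft, sup_adj, deleteEdges_adj, fromEdgeSet_adj, Set.mem_singleton_iff, hxl]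
  constructor
  · rintro (⟨rfl, h⟩ | ⟨h, -⟩)
    · exact absurd rfl h
    · exact (Sym2.eq_iff.1 h).elim (fun h => h.1) fun h => absurd h.2.symm hvl
  · rintro rfl
    exact Or.inr ⟨rfl, hvl⟩

lemma neighborSet_graft {u l v : V} (hN : G.neighborSet l = {u}) (hvl : v ≠ l) :
    (G.graft u l v).neighborSet l = {v} := by
  ext x
  rw [mem_neighborSet, adj_comm, adj_graft_iff hN hvl, Set.mem_singleton_iff]

/-- Paths between vertices other than the leaf `l` avoid `l`. -/
lemma IsPathCov.graft_eq {w' : Sym2 V → ℝ} {σ' : V → V → ℝ} {u l v x y : V}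
    (hσ : G.IsPathCov w σ) (hc : G.Connected) (hN : G.neighborSet l = {u})
    (hσ' : (G.graft u l v).IsPathCov w' σ') (hw : ∀ e ∈ G.edgeSet, e ≠ s(u, l) → w' e = w e)
    (hx : x ≠ l) (hy : y ≠ l) : σ' x y = σ x y := by
  obtain ⟨p, hp⟩ := hc.preconnected.exists_isPath x y
  have hl : l ∉ p.support := hp.isTrail.not_mem_support_of_subsingleton_neighborSet hx.symm
    hy.symm (hN ▸ Set.subsingleton_singleton)
  refine hσ.eq_of_isPath hσ' p hp fun e he => ?_
  have heu : e ≠ s(u, l) := by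
    rintro rfl
    exact hl (p.snd_mem_support_of_mem_edges he)
  refine ⟨?_, hw e (p.edges_subset_edgeSet he) heu⟩
  rw [graft, edgeSet_sup, edgeSet_deleteEdges]
  exact Or.inl ⟨p.edges_subset_edgeSet he, heu⟩

end SimpleGraph

/-! ### Grafting -/

/-- The identities satisfied by the covariances `σ₁` of a weighted tree in which the leaf `n2`
hangs (weight `wb`) from `n1`, whose only other neighbour is `v` (weight `wa`), and by the
covariances `σ₂` of the tree obtained by grafting `n2` onto `v`. -/
structure IsGraftingCov {V : Type*} (σ₁ σ₂ : V → V → ℝ) (n1 n2 v : V) (wa wb : ℝ) : Prop where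
  n1_ne_n2 : n1 ≠ n2
  n1_ne_v : n1 ≠ v
  v_ne_n2 : v ≠ n2
  sq_wa_lt_one : wa ^ 2 < 1
  sq_wb_lt_one : wb ^ 2 < 1
  symm₁ : ∀ x y, σ₁ x y = σ₁ y x
  symm₂ : ∀ x y, σ₂ x y = σ₂ y x
  self₁ : ∀ x, σ₁ x x = 1
  sq_le_one₁ : ∀ x y, σ₁ x y ^ 2 ≤ 1
  median₁ : ∀ a b c, ∃ m,
    σ₁ a b = σ₁ a m * σ₁ m b ∧ σ₁ a c = σ₁ a m * σ₁ m c ∧ σ₁ b c = σ₁ b m * σ₁ m c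
  leaf₁ : ∀ x, x ≠ n2 → σ₁ x n2 = σ₁ x n1 * wb
  n1_via_v₁ : ∀ x, x ≠ n1 → x ≠ n2 → σ₁ x n1 = σ₁ x v * wa
  eq_of_ne₂ : ∀ x y, x ≠ n2 → y ≠ n2 → σ₂ x y = σ₁ x y
  leaf₂ : ∀ x, x ≠ n2 → σ₂ x n2 = σ₁ x v * wb

namespace IsGraftingCov

variable {V : Type*} {σ₁ σ₂ : V → V → ℝ} {n1 n2 v : V} {wa wb : ℝ}

lemma cov₁_v_n1 (h : IsGraftingCov σ₁ σ₂ n1 n2 v wa wb) : σ₁ v n1 = wa := by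
  rw [h.n1_via_v₁ v h.n1_ne_v.symm h.v_ne_n2, h.self₁, one_mul]

lemma cov₁_n1_n2 (h : IsGraftingCov σ₁ σ₂ n1 n2 v wa wb) : σ₁ n1 n2 = wb := by
  rw [h.leaf₁ n1 h.n1_ne_n2, h.self₁, one_mul]

lemma exists_ne_ne (h : IsGraftingCov σ₁ σ₂ n1 n2 v wa wb) (a b : V) :
    ∃ z, z ≠ a ∧ z ≠ b := by
  by_contra! hab
  rcases eq_or_ne n1 a with rfl | h1
  · exact h.v_ne_n2 ((hab v h.n1_ne_v.symm).trans (hab n2 h.n1_ne_n2.symm).symm)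
  rcases eq_or_ne n2 a with rfl | h2
  · exact h.n1_ne_v ((hab n1 h1).trans (hab v h.v_ne_n2).symm)
  exact h.n1_ne_n2 ((hab n1 h1).trans (hab n2 h2).symm)

lemma rho2_n2_le_of_ne_n1 (h : IsGraftingCov σ₁ σ₂ n1 n2 v wa wb) {a b : V} (ha1 : a ≠ n1)
    (ha2 : a ≠ n2) (hb1 : b ≠ n1) (hb2 : b ≠ n2) : rho2 σ₂ a b n2 ≤ rho2 σ₁ a b n2 := by
  obtain ⟨m, hab, hav, hbv⟩ := h.median₁ a b v
  set A := σ₁ a m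
  set B := σ₁ m b
  set U := σ₁ m v
  have hbv' : σ₁ b v = B * U := by rw [hbv, h.symm₁ b m]
  have h₂ : rho2 σ₂ a b n2 = medianRho2 A B ((U * wb) ^ 2) := by
    refine rho2_eq_medianRho2 (by rw [h.eq_of_ne₂ a b ha2 hb2, hab]) ?_ ?_
    · rw [h.leaf₂ a ha2, hav, mul_assoc]
    · rw [h.leaf₂ b hb2, hbv', mul_assoc]
  have h₁ : rho2 σ₁ a b n2 = medianRho2 A B ((U * (wa * wb)) ^ 2) := by
    refine rho2_eq_medianRho2 hab ?_ ?_
    · rw [h.leaf₁ a ha2, h.n1_via_v₁ a ha1 ha2, hav]; ring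
    · rw [h.leaf₁ b hb2, h.n1_via_v₁ b hb1 hb2, hbv']; ring
  have ht : (U * (wa * wb)) ^ 2 ≤ (U * wb) ^ 2 := by
    simp only [mul_pow]
    exact mul_le_mul_of_nonneg_left (mul_le_of_le_one_left (sq_nonneg _) h.sq_wa_lt_one.le)
      (sq_nonneg U)
  have ht1 : (U * wb) ^ 2 < 1 := by
    rw [mul_pow]
    exact (mul_le_of_le_one_left (sq_nonneg wb) (h.sq_le_one₁ m v)).trans_lt h.sq_wb_lt_one
  rw [h₁, h₂]
  exact medianRho2_antitoneOn (h.sq_le_one₁ a m) (h.sq_le_one₁ m b)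
    ⟨sq_nonneg _, ht.trans_lt ht1⟩ ⟨sq_nonneg _, ht1⟩ ht

lemma rho2_n1_n2_le (h : IsGraftingCov σ₁ σ₂ n1 n2 v wa wb) {b : V} (hb1 : b ≠ n1)
    (hb2 : b ≠ n2) : rho2 σ₂ n1 b n2 ≤ rho2 σ₁ n1 b n2 := by
  have hn1b : σ₁ n1 b = wa * σ₁ b v := by rw [h.symm₁, h.n1_via_v₁ b hb1 hb2, mul_comm]
  have h₂ : rho2 σ₂ n1 b n2 = medianRho2 wa (σ₁ b v) (wb ^ 2) := by
    refine rho2_eq_medianRho2 (by rw [h.eq_of_ne₂ n1 b h.n1_ne_n2 hb2, hn1b]) ?_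
      (h.leaf₂ b hb2)
    rw [h.leaf₂ n1 h.n1_ne_n2, h.symm₁, h.cov₁_v_n1]
  have h₁ : rho2 σ₁ n1 b n2 = medianRho2 1 (wa * σ₁ b v) (wb ^ 2) := by
    refine rho2_eq_medianRho2 (by rw [hn1b, one_mul]) (by rw [h.cov₁_n1_n2, one_mul]) ?_
    rw [h.leaf₁ b hb2, h.symm₁, hn1b]
  rw [h₁, h₂]
  exact medianRho2_le_medianRho2_one_mul h.sq_wa_lt_one.le (h.sq_le_one₁ b v) (sq_nonneg _)
    h.sq_wb_lt_one

lemma rho2_n2_le (h : IsGraftingCov σ₁ σ₂ n1 n2 v wa wb) {a b : V} (hab : a ≠ b) (ha : a ≠ n2)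
    (hb : b ≠ n2) : rho2 σ₂ a b n2 ≤ rho2 σ₁ a b n2 := by
  by_cases ha1 : a = n1
  · subst ha1
    exact h.rho2_n1_n2_le hab.symm hb
  by_cases hb1 : b = n1
  · subst hb1
    rw [rho2_comm h.symm₂, rho2_comm h.symm₁]
    exact h.rho2_n1_n2_le ha1 ha
  exact h.rho2_n2_le_of_ne_n1 ha1 ha hb1 hb

/-- After grafting, `v` separates `n2` from every other vertex. -/
lemma rho2_n2_v_eq_zero (h : IsGraftingCov σ₁ σ₂ n1 n2 v wa wb) {a : V} (ha : a ≠ n2) :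
    rho2 σ₂ a n2 v = 0 := by
  refine rho2_eq_zero_of_eq_mul ?_
  rw [h.leaf₂ a ha, h.eq_of_ne₂ a v ha h.v_ne_n2, h.symm₂, h.leaf₂ v h.v_ne_n2, h.self₁,
    one_mul]

lemma rho2_v_n2_n1_le (h : IsGraftingCov σ₁ σ₂ n1 n2 v wa wb) {z : V} (hz1 : z ≠ n1)
    (hz2 : z ≠ n2) : rho2 σ₂ v n2 n1 ≤ rho2 σ₁ n1 n2 z := by
  have h₂ : rho2 σ₂ v n2 n1 = medianRho2 1 wb (wa ^ 2) := by
    refine rho2_eq_medianRho2 ?_ ?_ ?_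
    · rw [h.leaf₂ v h.v_ne_n2, h.self₁]
    · rw [h.eq_of_ne₂ v n1 h.v_ne_n2 h.n1_ne_n2, h.cov₁_v_n1, one_mul]
    · rw [h.symm₂, h.leaf₂ n1 h.n1_ne_n2, h.symm₁, h.cov₁_v_n1, mul_comm]
  have h₁ : rho2 σ₁ n1 n2 z = medianRho2 1 wb (σ₁ n1 z ^ 2) := by
    refine rho2_eq_medianRho2 (by rw [h.cov₁_n1_n2, one_mul]) (one_mul _).symm ?_
    rw [h.symm₁, h.leaf₁ z hz2, h.symm₁ z n1, mul_comm]
  have hτ : σ₁ n1 z ^ 2 ≤ wa ^ 2 := by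
    rw [h.symm₁, h.n1_via_v₁ z hz1 hz2, mul_pow]
    exact mul_le_of_le_one_left (sq_nonneg _) (h.sq_le_one₁ z v)
  rw [h₁, h₂]
  exact medianRho2_antitoneOn (by norm_num) h.sq_wb_lt_one.le
    ⟨sq_nonneg _, hτ.trans_lt h.sq_wa_lt_one⟩ ⟨sq_nonneg _, h.sq_wa_lt_one⟩ hτ

lemma minRho2_graft_le_maximin [Finite V] (h : IsGraftingCov σ₁ σ₂ n1 n2 v wa wb) {a b : V}
    (hab : a ≠ b) (ha : a ≠ n2) : minRho2 σ₂ a b ≤ maximin σ₁ := by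
  by_cases hb : b = n2
  · subst hb
    by_cases hav : a = v
    · subst hav
      calc minRho2 σ₂ a b ≤ rho2 σ₂ a b n1 := minRho2_le h.n1_ne_v h.n1_ne_n2
        _ ≤ minRho2 σ₁ n1 b := le_minRho2 (h.exists_ne_ne n1 b) fun z hz1 hz2 =>
            h.rho2_v_n2_n1_le hz1 hz2
        _ ≤ maximin σ₁ := minRho2_le_maximin h.n1_ne_n2
    · calc minRho2 σ₂ a b ≤ rho2 σ₂ a b v := minRho2_le (Ne.symm hav) h.v_ne_n2
        _ = 0 := h.rho2_n2_v_eq_zero ha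
        _ ≤ maximin σ₁ := maximin_nonneg h.sq_le_one₁
  have hz : ∀ z, z ≠ a → z ≠ b → rho2 σ₂ a b z ≤ rho2 σ₁ a b z := fun z hza hzb => by
    by_cases hz : z = n2
    · exact hz ▸ h.rho2_n2_le hab ha hb
    · rw [rho2, rho2, h.eq_of_ne₂ a b ha hb, h.eq_of_ne₂ a z ha hz, h.eq_of_ne₂ b z hb hz]
  calc minRho2 σ₂ a b ≤ minRho2 σ₁ a b := le_minRho2 (h.exists_ne_ne a b) fun z hza hzb =>
        (minRho2_le hza hzb).trans (hz z hza hzb)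
    _ ≤ maximin σ₁ := minRho2_le_maximin hab

theorem maximin_le [Finite V] (h : IsGraftingCov σ₁ σ₂ n1 n2 v wa wb) :
    maximin σ₂ ≤ maximin σ₁ := by
  refine maximin_le_of_forall_minRho2_le (maximin_nonneg h.sq_le_one₁) fun a b hab => ?_
  by_cases ha : a = n2
  · rw [minRho2_comm h.symm₂]
    exact h.minRho2_graft_le_maximin hab.symm (ha ▸ hab.symm)
  · exact h.minRho2_graft_le_maximin hab ha

end IsGraftingCov

theorem stmt_6_general {V : Type*} [Fintype V]
    (G1 G2 : SimpleGraph V) (hT1 : G1.IsTree) (hT2 : G2.IsTree)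
    (n1 n2 v : V)
    (hadj : G1.Adj n1 n2) (hleaf : (G1.neighborSet n2).ncard = 1)
    (hdeg : (G1.neighborSet n1).ncard = 2)
    (hadjv : G1.Adj n1 v) (hvne : v ≠ n2)
    (hG2 : G2 = G1.deleteEdges {s(n1, n2)} ⊔ fromEdgeSet {s(v, n2)})
    (w1 w2 : Sym2 V → ℝ)
    (hw1 : ∀ e ∈ G1.edgeSet, w1 e ∈ Set.Ioo (-1 : ℝ) 1 ∧ w1 e ≠ 0)
    (hshare : ∀ e ∈ G1.edgeSet, e ≠ s(n1, n2) → w2 e = w1 e)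
    (hnew : w2 s(v, n2) = w1 s(n1, n2))
    (σ1 σ2 : V → V → ℝ)
    (hσ1 : ∀ u u' : V, ∀ p : G1.Walk u u', p.IsPath → σ1 u u' = (p.edges.map w1).prod)
    (hσ2 : ∀ u u' : V, ∀ p : G2.Walk u u', p.IsPath → σ2 u u' = (p.edges.map w2).prod) :
    maximin σ2 ≤ maximin σ1 := by
  subst hG2
  replace hσ1 : G1.IsPathCov w1 σ1 := hσ1
  replace hσ2 : (G1.graft n1 n2 v).IsPathCov w2 σ2 := hσ2
  have hc1 := hT1.connected
  have hc2 : (G1.graft n1 n2 v).Connected := hT2.connected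
  have hw : ∀ e ∈ G1.edgeSet, |w1 e| < 1 := fun e he => abs_lt.2 (hw1 e he).1
  have hN2 : G1.neighborSet n2 = {n1} :=
    (Set.eq_of_subset_of_ncard_le (t := G1.neighborSet n2)
      (Set.singleton_subset_iff.2 hadj.symm) (by rw [hleaf, Set.ncard_singleton])).symm
  have hN1 : G1.neighborSet n1 = {v, n2} :=
    (Set.eq_of_subset_of_ncard_le (t := G1.neighborSet n1)
      (Set.insert_subset_iff.2 ⟨hadjv, Set.singleton_subset_iff.2 hadj⟩)
      (by rw [hdeg, Set.ncard_pair hvne])).symm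
  have heq : ∀ x y, x ≠ n2 → y ≠ n2 → σ2 x y = σ1 x y := fun x y =>
    hσ1.graft_eq hc1 hN2 hσ2 hshare
  exact IsGraftingCov.maximin_le (wa := w1 s(v, n1)) (wb := w1 s(n1, n2))
    { n1_ne_n2 := hadj.ne
      n1_ne_v := hadjv.ne
      v_ne_n2 := hvne
      sq_wa_lt_one := (sq_lt_one_iff_abs_lt_one _).2 (hw _ hadjv.symm)
      sq_wb_lt_one := (sq_lt_one_iff_abs_lt_one _).2 (hw _ hadj)
      symm₁ := hσ1.symm hc1
      symm₂ := hσ2.symm hc2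
      self₁ := hσ1.apply_self
      sq_le_one₁ := fun x y => (sq_le_one_iff_abs_le_one _).2
        (hσ1.abs_le_one hc1 (fun e he => (hw e he).le) x y)
      median₁ := hσ1.exists_median hc1
      leaf₁ := fun x hx => hσ1.eq_mul_of_neighborSet_eq_singleton hc1 hN2 hx
      n1_via_v₁ := fun x hx1 hx2 =>
        hσ1.eq_mul_of_neighborSet_eq_pair hc1 hN1 (by simp [hN2]) hx1 hx2
      eq_of_ne₂ := heq
      leaf₂ := fun x hx => by
        rw [hσ2.eq_mul_of_neighborSet_eq_singleton hc2 (neighborSet_graft hN2 hvne) hx,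
          heq x v hx hvne, hnew] }

/-- Let `T1` be a weighted tree with `|V| ≥ 3`, having a leaf `n2` whose
unique neighbor `n1` has degree 2, and let `v` be the other neighbor of `n1`.  Let `T2`
be obtained from `T1` by grafting (deleting edge `{n1,n2}`, adding edge `{v,n2}` with
the same weight, all other weights unchanged).  Here the covariance `σᵢ u u'` is the
product of the weights along the unique path in `Tᵢ` from `u` to `u'` (with `σᵢ u u = 1`).
Then `S(T1,W) ≥ S(T2,W')`: grafting never increases the maximin value. -/
theorem stmt_6 {V : Type*} [Fintype V] [DecidableEq V] (hcard : 3 ≤ Fintype.card V)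
    (G1 G2 : SimpleGraph V) (hT1 : G1.IsTree) (hT2 : G2.IsTree)
    (n1 n2 v : V)
    (hadj : G1.Adj n1 n2) (hleaf : (G1.neighborSet n2).ncard = 1)
    (hdeg : (G1.neighborSet n1).ncard = 2)
    (hadjv : G1.Adj n1 v) (hvne : v ≠ n2)
    (hG2 : G2 = G1.deleteEdges {s(n1, n2)} ⊔ fromEdgeSet {s(v, n2)})
    (w1 w2 : Sym2 V → ℝ)
    (hw1 : ∀ e ∈ G1.edgeSet, w1 e ∈ Set.Ioo (-1 : ℝ) 1 ∧ w1 e ≠ 0)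
    (hshare : ∀ e ∈ G1.edgeSet, e ≠ s(n1, n2) → w2 e = w1 e)
    (hnew : w2 s(v, n2) = w1 s(n1, n2))
    (σ1 σ2 : V → V → ℝ)
    (hσ1 : ∀ u u' : V, ∀ p : G1.Walk u u', p.IsPath → σ1 u u' = (p.edges.map w1).prod)
    (hσ2 : ∀ u u' : V, ∀ p : G2.Walk u u', p.IsPath → σ2 u u' = (p.edges.map w2).prod) :
    maximin σ2 ≤ maximin σ1 :=
  stmt_6_general G1 G2 hT1 hT2 n1 n2 v hadj hleaf hdeg hadjv hvne hG2 w1 w2 hw1 hshare hnew σ1 σ2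
    hσ1 hσ2
end

section
/- Let T = (V,E) be a finite tree with |V| ≥ 4 and at least one internal edge, i.e., |I| ≥ 1 where |I| is the number of internal edges of T. Write the Tutte-like polynomial f(T;t,z) as a polynomial in t with coefficients in ℤ[z]. Then the coefficient of t^{|E|−1} equals α·(1+z)^{|I|−1} + β·(1+z)^{|I|}, where α is the number of leaf edges of T whose non-leaf endpoint has degree exactly 2 (the leaf edges with no leaf siblings that are eligible for grafting) and β is the number of leaf edges of T whose non-leaf endpoint has degree at least 3. -/
open SimpleGraph

/-- `IsSubtree G F`: the finite edge set `F` consists of edges of `G` and its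
edge-induced subgraph is connected. -/
def IsSubtree {V : Type*} (G : SimpleGraph V) (F : Finset (Sym2 V)) : Prop :=
  (F : Set (Sym2 V)) ⊆ G.edgeSet ∧
    ∀ u v : V, u ∈ (fromEdgeSet (F : Set (Sym2 V))).support →
      v ∈ (fromEdgeSet (F : Set (Sym2 V))).support →
      (fromEdgeSet (F : Set (Sym2 V))).Reachable u v

/-- `leafCount F`: the number of leaf edges of the edge set `F`, i.e. edges of `F`
incident to a vertex of degree 1 in the subgraph formed by `F`. -/
noncomputable def leafCount {V : Type*} (F : Finset (Sym2 V)) : ℕ :=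
  {e : Sym2 V | e ∈ F ∧ ∃ u ∈ e,
    ((fromEdgeSet (F : Set (Sym2 V))).neighborSet u).ncard = 1}.ncard

/-- The Tutte-like polynomial `f(T;t,z) = Σ_F t^{|F|}·(z+1)^{|F|−L(F)}`, the sum running
over all subtrees `F` of `T` (connected edge subsets, including `∅`), viewed as an
element of `ℤ[z][t]` (outer variable `t`, inner variable `z`). -/
noncomputable def tutteLike {V : Type*} [Fintype V] (G : SimpleGraph V) :
    Polynomial (Polynomial ℤ) :=
  letI := Classical.decEq V
  letI : DecidableRel G.Adj := Classical.decRel _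
  letI := Classical.decPred (IsSubtree G)
  ∑ F ∈ G.edgeFinset.powerset.filter (IsSubtree G),
    Polynomial.C ((Polynomial.X + 1) ^ (F.card - leafCount F)) * Polynomial.X ^ F.card

/-- `alphaCount G`: the number of leaf edges of `G` whose non-leaf endpoint has degree
exactly 2. -/
noncomputable def alphaCount {V : Type*} (G : SimpleGraph V) : ℕ :=
  {e : Sym2 V | e ∈ G.edgeSet ∧ ∃ a b : V, e = s(a, b) ∧
    (G.neighborSet a).ncard = 1 ∧ (G.neighborSet b).ncard = 2}.ncard

/-- `betaCount G`: the number of leaf edges of `G` whose non-leaf endpoint has degree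
at least 3. -/
noncomputable def betaCount {V : Type*} (G : SimpleGraph V) : ℕ :=
  {e : Sym2 V | e ∈ G.edgeSet ∧ ∃ a b : V, e = s(a, b) ∧
    (G.neighborSet a).ncard = 1 ∧ 3 ≤ (G.neighborSet b).ncard}.ncard

/-- `internalCount G`: the number of internal (non-leaf) edges of `G`. -/
noncomputable def internalCount {V : Type*} (G : SimpleGraph V) : ℕ :=
  {e : Sym2 V | e ∈ G.edgeSet ∧ ∀ a ∈ e, (G.neighborSet a).ncard ≠ 1}.ncard

/-!
A subtree with `|E| - 1` edges is `E \ {e}` for one edge `e`, and in a tree it is connected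
exactly when `e` is a leaf edge `ab` with `a` a leaf. Its exponent `|F| - L(F)` is the number of
internal edges of `T - e`. If `deg b ≥ 3`, removing `ab` changes no internal edge. If
`deg b = 2`, then `b` becomes a leaf, and the other edge `bc` at `b` stops being internal while
every other internal edge stays internal; `bc` was internal because `c` is not a leaf when
`|V| ≥ 4`.
-/

open Polynomial

namespace SimpleGraph

variable {V : Type*} {G : SimpleGraph V}

lemma Connected.eq_univ_of_neighborSet_subset (hG : G.Connected) {S : Set V}
    (hS : ∀ x ∈ S, G.neighborSet x ⊆ S) {x : V} (hx : x ∈ S) : S = Set.univ := by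
  refine Set.eq_univ_of_forall fun v => ?_
  obtain ⟨p⟩ := hG.preconnected x v
  induction p with
  | nil => exact hx
  | cons h _ ih => exact ih (hS _ hx h)

lemma neighborSet_eq_singleton_of_ncard_eq_one {a b : V} (ha : (G.neighborSet a).ncard = 1)
    (hab : G.Adj a b) : G.neighborSet a = {b} := by
  obtain ⟨c, hc⟩ := Set.ncard_eq_one.mp ha
  rwa [hc, Set.singleton_eq_singleton_iff, eq_comm, ← Set.mem_singleton_iff, ← hc]

lemma neighborSet_deleteEdges_singleton_left (a b : V) :
    (G.deleteEdges {s(a, b)}).neighborSet a = G.neighborSet a \ {b} := by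
  ext y
  simp only [mem_neighborSet, deleteEdges_adj, Set.mem_singleton_iff, Sym2.congr_right,
    Set.mem_sdiff]

lemma neighborSet_deleteEdges_singleton_right (a b : V) :
    (G.deleteEdges {s(a, b)}).neighborSet b = G.neighborSet b \ {a} := by
  rw [Sym2.eq_swap, neighborSet_deleteEdges_singleton_left]

lemma neighborSet_deleteEdges_singleton_of_ne {a b u : V} (hua : u ≠ a) (hub : u ≠ b) :
    (G.deleteEdges {s(a, b)}).neighborSet u = G.neighborSet u := by
  ext y
  simp only [mem_neighborSet, deleteEdges_adj, Set.mem_singleton_iff, and_iff_left_iff_imp]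
  rintro - h
  rcases Sym2.eq_iff.mp h with ⟨rfl, -⟩ | ⟨rfl, -⟩ <;> contradiction

lemma Connected.card_le_ncard_of_neighborSet_subset [Finite V] (hG : G.Connected) {S : Set V}
    (hS : ∀ x ∈ S, G.neighborSet x ⊆ S) {x : V} (hx : x ∈ S) : Nat.card V ≤ S.ncard := by
  rw [hG.eq_univ_of_neighborSet_subset hS hx, Set.ncard_univ]

lemma Connected.ncard_neighborSet_ne_one_of_adj [Finite V] (hG : G.Connected)
    (hV : 2 < Nat.card V) {a b : V} (hab : G.Adj a b) (ha : (G.neighborSet a).ncard = 1) :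
    (G.neighborSet b).ncard ≠ 1 := by
  intro hb
  have hNa := neighborSet_eq_singleton_of_ncard_eq_one ha hab
  have hNb := neighborSet_eq_singleton_of_ncard_eq_one hb hab.symm
  have hclosed : ∀ x ∈ ({a, b} : Set V), G.neighborSet x ⊆ {a, b} := by
    rintro x (rfl | rfl)
    · simp [hNa]
    · simp [hNb]
  have := hG.card_le_ncard_of_neighborSet_subset hclosed (Set.mem_insert a {b})
  have := Set.ncard_insert_le a {b}
  rw [Set.ncard_singleton] at this
  omega

lemma Connected.ncard_neighborSet_ne_one_of_neighborSet_eq_pair [Finite V] (hG : G.Connected)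
    (hV : 3 < Nat.card V) {a b c : V} (ha : G.neighborSet a = {b})
    (hb : G.neighborSet b = {a, c}) : (G.neighborSet c).ncard ≠ 1 := by
  intro hc
  have hbc : G.Adj b c := by simp [← mem_neighborSet, hb]
  have hNc := neighborSet_eq_singleton_of_ncard_eq_one hc hbc.symm
  have hclosed : ∀ x ∈ ({a, b, c} : Set V), G.neighborSet x ⊆ {a, b, c} := by
    rintro x (rfl | rfl | rfl)
    · simp [ha]
    · simp [hb, Set.insert_subset_iff]
    · simp [hNc]
  have := hG.card_le_ncard_of_neighborSet_subset hclosed (Set.mem_insert a {b, c})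
  have := Set.ncard_insert_le a {b, c}
  have := Set.ncard_insert_le b {c}
  rw [Set.ncard_singleton] at this
  omega

def leafEdgeSet (G : SimpleGraph V) : Set (Sym2 V) :=
  {e | e ∈ G.edgeSet ∧ ∃ u ∈ e, (G.neighborSet u).ncard = 1}

def internalEdgeSet (G : SimpleGraph V) : Set (Sym2 V) :=
  {e | e ∈ G.edgeSet ∧ ∀ u ∈ e, (G.neighborSet u).ncard ≠ 1}

def pendantEdgeSet (G : SimpleGraph V) (P : ℕ → Prop) : Set (Sym2 V) :=
  {e | e ∈ G.edgeSet ∧ ∃ a b : V, e = s(a, b) ∧ (G.neighborSet a).ncard = 1 ∧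
    P (G.neighborSet b).ncard}

lemma internalCount_eq_ncard (G : SimpleGraph V) :
    internalCount G = (internalEdgeSet G).ncard := rfl

lemma alphaCount_eq_ncard (G : SimpleGraph V) :
    alphaCount G = (pendantEdgeSet G (· = 2)).ncard := rfl

lemma betaCount_eq_ncard (G : SimpleGraph V) :
    betaCount G = (pendantEdgeSet G (3 ≤ ·)).ncard := rfl

lemma eq_of_mem_edgeSet_of_neighborSet_eq_singleton {e : Sym2 V} {a b : V} (he : e ∈ G.edgeSet)
    (hae : a ∈ e) (ha : G.neighborSet a = {b}) : e = s(a, b) := by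
  obtain ⟨y, rfl⟩ := Sym2.mem_iff_exists.mp hae
  have hy : y ∈ G.neighborSet a := he
  rw [ha, Set.mem_singleton_iff] at hy
  rw [hy]

section DeletePendantEdge

variable [Finite V] [DecidableEq V] {a b : V}

lemma ncard_neighborSet_deleteEdges_eq_one_iff {u : V}
    (ha : G.neighborSet a = {b}) (hua : u ≠ a) :
    ((G.deleteEdges {s(a, b)}).neighborSet u).ncard = 1 ↔
      (G.neighborSet u).ncard = if u = b then 2 else 1 := by
  split_ifs with hub
  · subst hub
    have hau : a ∈ G.neighborSet u := (show u ∈ G.neighborSet a by simp [ha]).symm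
    have := (Set.ncard_pos (Set.toFinite _)).mpr ⟨a, hau⟩
    rw [neighborSet_deleteEdges_singleton_right, Set.ncard_sdiff_singleton_of_mem hau]
    omega
  · rw [neighborSet_deleteEdges_singleton_of_ne hua hub]

lemma mem_internalEdgeSet_deleteEdges_iff {e : Sym2 V}
    (ha : G.neighborSet a = {b}) :
    e ∈ internalEdgeSet (G.deleteEdges {s(a, b)}) ↔ e ∈ G.edgeSet ∧ e ≠ s(a, b) ∧
      ∀ u ∈ e, (G.neighborSet u).ncard ≠ if u = b then 2 else 1 := by
  simp only [internalEdgeSet, Set.mem_ofPred_eq, edgeSet_deleteEdges, Set.mem_sdiff,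
    Set.mem_singleton_iff, and_assoc]
  refine and_congr_right fun he => and_congr_right fun hne => forall₂_congr fun u hu => ?_
  have hua : u ≠ a := by
    rintro rfl
    exact hne (eq_of_mem_edgeSet_of_neighborSet_eq_singleton he hu ha)
  exact not_congr (ncard_neighborSet_deleteEdges_eq_one_iff ha hua)

lemma internalEdgeSet_deleteEdges_of_three_le (ha : G.neighborSet a = {b})
    (hb : 3 ≤ (G.neighborSet b).ncard) :
    internalEdgeSet (G.deleteEdges {s(a, b)}) = internalEdgeSet G := by
  ext e
  rw [mem_internalEdgeSet_deleteEdges_iff ha]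
  constructor
  · rintro ⟨he, -, h⟩
    refine ⟨he, fun u hu hu1 => h u hu ?_⟩
    split_ifs with hub
    · subst hub; omega
    · exact hu1
  · rintro ⟨he, h⟩
    refine ⟨he, ?_, fun u hu => ?_⟩
    · rintro rfl
      exact h a (Sym2.mem_mk_left a b) (by rw [ha, Set.ncard_singleton])
    · split_ifs with hub
      · subst hub; omega
      · exact h u hu

lemma internalEdgeSet_deleteEdges_of_eq_pair {c : V} (ha : G.neighborSet a = {b})
    (hb : G.neighborSet b = {a, c}) (hac : a ≠ c) :
    internalEdgeSet (G.deleteEdges {s(a, b)}) = internalEdgeSet G \ {s(b, c)} := by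
  have hb2 : (G.neighborSet b).ncard = 2 := by rw [hb, Set.ncard_pair hac]
  ext e
  rw [mem_internalEdgeSet_deleteEdges_iff ha, Set.mem_sdiff, Set.mem_singleton_iff]
  constructor
  · rintro ⟨he, -, h⟩
    have hbe : b ∉ e := fun hbe => h b hbe (by rw [if_pos rfl, hb2])
    refine ⟨⟨he, fun u hu => ?_⟩, ?_⟩
    · simpa [show u ≠ b by rintro rfl; exact hbe hu] using h u hu
    · rintro rfl
      exact hbe (Sym2.mem_mk_left b c)
  · rintro ⟨⟨he, h⟩, hne⟩
    have hbe : b ∉ e := by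
      intro hbe
      obtain ⟨y, rfl⟩ := Sym2.mem_iff_exists.mp hbe
      have hy : y ∈ G.neighborSet b := he
      rcases (by simpa [hb] using hy : y = a ∨ y = c) with rfl | rfl
      · exact h y (Sym2.mem_mk_right b y) (by rw [ha, Set.ncard_singleton])
      · exact hne rfl
    refine ⟨he, fun h' => hbe (h' ▸ Sym2.mem_mk_right a b), fun u hu => ?_⟩
    rw [if_neg (show u ≠ b by rintro rfl; exact hbe hu)]
    exact h u hu

end DeletePendantEdge

lemma Connected.internalCount_deleteEdges_add_one_of_mem [Finite V] (hG : G.Connected)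
    (hV : 3 < Nat.card V) {e : Sym2 V} (he : e ∈ pendantEdgeSet G (· = 2)) :
    internalCount (G.deleteEdges {e}) + 1 = internalCount G := by
  classical
  obtain ⟨hE, a, b, rfl, ha1, hb2⟩ := he
  have hab : G.Adj a b := hE
  have ha := neighborSet_eq_singleton_of_ncard_eq_one ha1 hab
  have hab' : a ∈ G.neighborSet b := hab.symm
  obtain ⟨c, hc⟩ := Set.ncard_eq_one.mp
    (show (G.neighborSet b \ {a}).ncard = 1 by rw [Set.ncard_sdiff_singleton_of_mem hab', hb2])
  have hac : a ≠ c := fun h => by simpa [h] using hc.symm.subset rfl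
  have hb : G.neighborSet b = {a, c} := by rw [← hc, Set.insert_sdiff_singleton,
    Set.insert_eq_of_mem hab']
  have hbc : s(b, c) ∈ internalEdgeSet G := by
    refine ⟨by simp [← mem_neighborSet, hb], fun u hu => ?_⟩
    rcases Sym2.mem_iff.mp hu with rfl | rfl
    · omega
    · exact hG.ncard_neighborSet_ne_one_of_neighborSet_eq_pair hV ha hb
  rw [internalCount_eq_ncard, internalCount_eq_ncard,
    internalEdgeSet_deleteEdges_of_eq_pair ha hb hac, Set.ncard_sdiff_singleton_add_one hbc]

lemma internalCount_deleteEdges_of_mem [Finite V] {e : Sym2 V}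
    (he : e ∈ pendantEdgeSet G (3 ≤ ·)) :
    internalCount (G.deleteEdges {e}) = internalCount G := by
  classical
  obtain ⟨hE, a, b, rfl, ha1, hb⟩ := he
  rw [internalCount_eq_ncard, internalCount_eq_ncard, internalEdgeSet_deleteEdges_of_three_le
    (neighborSet_eq_singleton_of_ncard_eq_one ha1 hE) hb]

lemma Connected.leafEdgeSet_eq_union [Finite V] (hG : G.Connected) (hV : 2 < Nat.card V) :
    leafEdgeSet G = pendantEdgeSet G (· = 2) ∪ pendantEdgeSet G (3 ≤ ·) := by
  ext e
  constructor
  · rintro ⟨he, a, hae, ha⟩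
    obtain ⟨b, rfl⟩ := Sym2.mem_iff_exists.mp hae
    have hab : G.Adj a b := he
    have hb1 := hG.ncard_neighborSet_ne_one_of_adj hV hab ha
    have hb0 : 0 < (G.neighborSet b).ncard :=
      (Set.ncard_pos (Set.toFinite _)).mpr ⟨a, hab.symm⟩
    by_cases hb2 : (G.neighborSet b).ncard = 2
    · exact Or.inl ⟨he, a, b, rfl, ha, hb2⟩
    · exact Or.inr ⟨he, a, b, rfl, ha, by omega⟩
  · rintro (⟨he, a, b, rfl, ha, -⟩ | ⟨he, a, b, rfl, ha, -⟩) <;>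
      exact ⟨he, a, Sym2.mem_mk_left a b, ha⟩

lemma disjoint_pendantEdgeSet (G : SimpleGraph V) :
    Disjoint (pendantEdgeSet G (· = 2)) (pendantEdgeSet G (3 ≤ ·)) := by
  rw [Set.disjoint_left]
  rintro e ⟨-, a, b, rfl, ha, hb⟩ ⟨-, a', b', he, ha', hb'⟩
  rcases Sym2.eq_iff.mp he with ⟨rfl, rfl⟩ | ⟨rfl, rfl⟩ <;> simp_all

lemma mem_support_deleteEdges_of_adj [Finite V] {a b : V} (hab : G.Adj a b)
    (ha : (G.neighborSet a).ncard ≠ 1) : a ∈ (G.deleteEdges {s(a, b)}).support := by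
  have hb : b ∈ G.neighborSet a := hab
  have := (Set.ncard_pos (Set.toFinite _)).mpr ⟨b, hb⟩
  obtain ⟨z, hz, hzb⟩ := Set.exists_ne_of_one_lt_ncard (s := G.neighborSet a) (by omega) b
  refine ⟨z, show z ∈ (G.deleteEdges {s(a, b)}).neighborSet a from ?_⟩
  rw [neighborSet_deleteEdges_singleton_left]
  exact ⟨hz, hzb⟩

lemma Connected.reachable_deleteEdges_of_mem_support (hG : G.Connected) {a b : V}
    (ha : G.neighborSet a = {b}) {u v : V} (hu : u ∈ (G.deleteEdges {s(a, b)}).support)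
    (hv : v ∈ (G.deleteEdges {s(a, b)}).support) : (G.deleteEdges {s(a, b)}).Reachable u v := by
  have hisolated : (G.deleteEdges {s(a, b)}).neighborSet a = ∅ := by
    rw [neighborSet_deleteEdges_singleton_left, ha, Set.sdiff_self]
  have hne : ∀ x ∈ (G.deleteEdges {s(a, b)}).support, x ≠ a := by
    rintro x ⟨y, hy⟩ rfl
    exact (Set.ext_iff.mp hisolated y).mp hy
  obtain ⟨p, hp⟩ := (hG.preconnected u v).exists_isPath
  have hap : a ∉ p.support := hp.isTrail.not_mem_support_of_subsingleton_neighborSet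
    (hne u hu).symm (hne v hv).symm (ha ▸ Set.subsingleton_singleton)
  exact (p.toDeleteEdge _ fun h => hap (p.fst_mem_support_of_mem_edges h)).reachable

lemma fromEdgeSet_edgeFinset_erase [DecidableEq V] [Fintype G.edgeSet] (e : Sym2 V) :
    fromEdgeSet (G.edgeFinset.erase e : Set (Sym2 V)) = G.deleteEdges {e} := by
  rw [Finset.coe_erase, coe_edgeFinset, ← edgeSet_deleteEdges, fromEdgeSet_edgeSet]

lemma IsTree.isSubtree_edgeFinset_erase_iff [Finite V] [DecidableEq V] [Fintype G.edgeSet]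
    (hT : G.IsTree) {e : Sym2 V} (he : e ∈ G.edgeSet) :
    IsSubtree G (G.edgeFinset.erase e) ↔ e ∈ leafEdgeSet G := by
  induction e using Sym2.ind with | _ a b => ?_
  have hab : G.Adj a b := he
  rw [IsSubtree, fromEdgeSet_edgeFinset_erase]
  constructor
  · rintro ⟨-, hreach⟩
    by_contra hleaf
    have ha : (G.neighborSet a).ncard ≠ 1 := fun h => hleaf ⟨he, a, Sym2.mem_mk_left a b, h⟩
    have hb : (G.neighborSet b).ncard ≠ 1 := fun h => hleaf ⟨he, b, Sym2.mem_mk_right a b, h⟩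
    have hbridge := isBridge_iff.mp (isAcyclic_iff_forall_isBridge.mp hT.isAcyclic he)
    refine hbridge (hreach a b (mem_support_deleteEdges_of_adj hab ha) ?_)
    rw [Sym2.eq_swap]
    exact mem_support_deleteEdges_of_adj hab.symm hb
  · rintro ⟨-, u, hu, hu1⟩
    refine ⟨by simp, fun x y hx hy => ?_⟩
    rcases Sym2.mem_iff.mp hu with rfl | rfl
    · exact hT.connected.reachable_deleteEdges_of_mem_support
        (neighborSet_eq_singleton_of_ncard_eq_one hu1 hab) hx hy
    · rw [Sym2.eq_swap] at hx hy ⊢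
      exact hT.connected.reachable_deleteEdges_of_mem_support
        (neighborSet_eq_singleton_of_ncard_eq_one hu1 hab.symm) hx hy

lemma card_sub_leafCount (F : Finset (Sym2 V)) (hF : ∀ e ∈ F, ¬e.IsDiag) :
    F.card - leafCount F = internalCount (fromEdgeSet (F : Set (Sym2 V))) := by
  set P := {e : Sym2 V | ∃ u ∈ e,
    ((fromEdgeSet (F : Set (Sym2 V))).neighborSet u).ncard = 1}
  have hleaf : leafCount F = ((F : Set (Sym2 V)) ∩ P).ncard := rfl
  have hinternal :
      internalCount (fromEdgeSet (F : Set (Sym2 V))) = ((F : Set (Sym2 V)) \ P).ncard := by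
    rw [internalCount]
    congr 1
    ext e
    simp only [edgeSet_fromEdgeSet, Set.mem_sdiff, Finset.mem_coe, Sym2.mem_diagSet, P]
    grind
  rw [hleaf, hinternal, ← Set.ncard_coe_finset,
    ← Set.ncard_inter_add_ncard_sdiff_eq_ncard _ P F.finite_toSet]
  omega

open Classical in
lemma coeff_tutteLike [Fintype V] (G : SimpleGraph V) (n : ℕ) :
    (tutteLike G).coeff n = ∑ F ∈ G.edgeFinset.powerset with IsSubtree G F ∧ F.card = n,
      (X + 1 : ℤ[X]) ^ (F.card - leafCount F) := by
  rw [tutteLike, finsetSum_coeff, Finset.sum_filter, Finset.sum_filter]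
  refine Finset.sum_congr (by congr) fun F _ => ?_
  simp only [coeff_C_mul, coeff_X_pow, mul_ite, mul_one, mul_zero, ite_and, eq_comm]

open Classical in
lemma IsTree.filter_isSubtree_card_pred [Fintype V] [Nontrivial V] (hT : G.IsTree) :
    {F ∈ G.edgeFinset.powerset | IsSubtree G F ∧ F.card = G.edgeSet.ncard - 1} =
      (leafEdgeSet G).toFinset.image G.edgeFinset.erase := by
  have hE : G.edgeSet.ncard = G.edgeFinset.card := by
    rw [← coe_edgeFinset, Set.ncard_coe_finset]
  have hpos : 0 < G.edgeFinset.card := by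
    have := hT.card_edgeFinset
    have := Fintype.one_lt_card (α := V)
    omega
  ext F
  simp only [Finset.mem_filter, Finset.mem_powerset, Finset.mem_image, Set.mem_toFinset]
  constructor
  · rintro ⟨hFE, hF, hcard⟩
    obtain ⟨e, heE, heF⟩ : ∃ e ∈ G.edgeFinset, e ∉ F := by
      by_contra! h
      have := Finset.card_le_card h
      omega
    have hFe : F = G.edgeFinset.erase e := by
      refine Finset.eq_of_subset_of_card_le (fun x hx => Finset.mem_erase.mpr
        ⟨fun h => heF (h ▸ hx), hFE hx⟩) ?_
      rw [Finset.card_erase_of_mem heE]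
      omega
    subst hFe
    exact ⟨e, (hT.isSubtree_edgeFinset_erase_iff (mem_edgeFinset.mp heE)).mp hF, rfl⟩
  · rintro ⟨e, he, rfl⟩
    refine ⟨Finset.erase_subset _ _, (hT.isSubtree_edgeFinset_erase_iff he.1).mpr he, ?_⟩
    rw [Finset.card_erase_of_mem (mem_edgeFinset.mpr he.1), hE]

open Classical in
lemma IsTree.coeff_tutteLike_pred [Fintype V] [Nontrivial V] (hT : G.IsTree) :
    (tutteLike G).coeff (G.edgeSet.ncard - 1) =
      ∑ e ∈ (leafEdgeSet G).toFinset, (X + 1 : ℤ[X]) ^ internalCount (G.deleteEdges {e}) := by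
  rw [coeff_tutteLike, hT.filter_isSubtree_card_pred, Finset.sum_image fun e he e' he' =>
    Finset.erase_injOn _ (mem_edgeFinset.mpr (Set.mem_toFinset.mp he).1)
      (mem_edgeFinset.mpr (Set.mem_toFinset.mp he').1)]
  refine Finset.sum_congr rfl fun e _ => ?_
  rw [card_sub_leafCount _ fun e' he' => G.not_isDiag_of_mem_edgeSet
    (mem_edgeFinset.mp (Finset.mem_of_mem_erase he')), fromEdgeSet_edgeFinset_erase]

end SimpleGraph

theorem stmt_12_general {V : Type*} [Fintype V] (hcard : 4 ≤ Fintype.card V)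
    (G : SimpleGraph V) (hT : G.IsTree) :
    (tutteLike G).coeff (G.edgeSet.ncard - 1) =
      (alphaCount G : Polynomial ℤ) * (Polynomial.X + 1) ^ (internalCount G - 1) +
        (betaCount G : Polynomial ℤ) * (Polynomial.X + 1) ^ (internalCount G) := by
  classical
  have hV : 3 < Nat.card V := by rw [Nat.card_eq_fintype_card]; omega
  have : Nontrivial V := Fintype.one_lt_card_iff_nontrivial.mp (by omega)
  have hG := hT.connected
  have hα : ∀ e ∈ (pendantEdgeSet G (· = 2)).toFinset,
      (X + 1 : ℤ[X]) ^ internalCount (G.deleteEdges {e}) = (X + 1) ^ (internalCount G - 1) :=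
    fun e he => by
      rw [← hG.internalCount_deleteEdges_add_one_of_mem hV (Set.mem_toFinset.mp he),
        Nat.add_sub_cancel]
  have hβ : ∀ e ∈ (pendantEdgeSet G (3 ≤ ·)).toFinset,
      (X + 1 : ℤ[X]) ^ internalCount (G.deleteEdges {e}) = (X + 1) ^ internalCount G :=
    fun e he => by rw [internalCount_deleteEdges_of_mem (Set.mem_toFinset.mp he)]
  rw [hT.coeff_tutteLike_pred, hG.leafEdgeSet_eq_union (by omega), Set.toFinset_union,
    Finset.sum_union (Set.disjoint_toFinset.mpr (disjoint_pendantEdgeSet G)),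
    Finset.sum_congr rfl hα, Finset.sum_congr rfl hβ, Finset.sum_const, Finset.sum_const,
    nsmul_eq_mul, nsmul_eq_mul, alphaCount_eq_ncard, betaCount_eq_ncard,
    Set.ncard_eq_toFinset_card', Set.ncard_eq_toFinset_card']

/-- For a finite tree `T = (V,E)` with `|V| ≥ 4` and `|I| ≥ 1` internal
edges, the coefficient of `t^{|E|−1}` in the Tutte-like polynomial `f(T;t,z)` equals
`α·(1+z)^{|I|−1} + β·(1+z)^{|I|}`, where `α` is the number of leaf edges whose non-leaf
endpoint has degree exactly 2 and `β` the number of leaf edges whose non-leaf endpoint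
has degree at least 3. -/
theorem stmt_12 {V : Type*} [Fintype V] (hcard : 4 ≤ Fintype.card V)
    (G : SimpleGraph V) (hT : G.IsTree) (hI : 1 ≤ internalCount G) :
    (tutteLike G).coeff (G.edgeSet.ncard - 1) =
      (alphaCount G : Polynomial ℤ) * (Polynomial.X + 1) ^ (internalCount G - 1) +
        (betaCount G : Polynomial ℤ) * (Polynomial.X + 1) ^ (internalCount G) :=
  stmt_12_general hcard G hT
end
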